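/- Decomposition of the pairing operator via the combinatorial R matrix: let u ∈ ℕ^n with min of nonzero entries > 1 and nested decomposition u = u_1 + ⋯ + u_m into 0-1 vectors with 0 < u_m ≤ ⋯ ≤ u_2 = u_1, and let Q ⊆ [n] with indicator vector 𝐐. Then Q^{(1)}(u) = 𝐐 + Σ_{i=2}^{m} (ℛ(𝐐 ⊗ u_i))_1, where ℛ is the combinatorial R matrix on pairs of 0-1 vectors (the Nakayashiki–Yamada rule: exchange cylindrically unmatched particles between the two rows under weakly-right pairing) and (·)_1 denotes the first tensor factor. -/

import Mathlib

/-- Linear bracket-matching pass.  Tokens are `(site, isOpen)`.  The second argument is the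
stack of currently unmatched open brackets (most recent first), the third accumulates the
linearly unmatched closed brackets (most recent first). -/
def pairProcess {α : Type} : List (α × Bool) → List α → List α → List α × List α
  | [], opens, closes => (opens, closes)
  | (a, true) :: ts, opens, closes => pairProcess ts (a :: opens) closes
  | (a, false) :: ts, [], closes => pairProcess ts [] (a :: closes)
  | (_, false) :: ts, _ :: opens, closes => pairProcess ts opens closes

/-- The token list of `Par(A,B)`: scanning sites `j = 1, …, n` in order, record an open
bracket for `j ∈ B` (the row above) and then a closed bracket for `j ∈ A` (the row below). -/
def parTokens {n : ℕ} (A B : Finset (Fin n)) : List (Fin n × Bool) :=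
  (List.finRange n).flatMap
    (fun j => (if j ∈ B then [(j, true)] else []) ++ (if j ∈ A then [(j, false)] else []))

/-- Result of the linear pass on `Par(A,B)`. -/
def parRes {n : ℕ} (A B : Finset (Fin n)) : List (Fin n) × List (Fin n) :=
  pairProcess (parTokens A B) [] []

/-- The set of cylindrically unpaired particles of `B` (open brackets) in `Par(A,B)`:
after the linear pass, the cyclic rule additionally matches `min` many remaining opens
and closes, leaving the earliest surplus opens unmatched. -/
def unmatchedOpen {n : ℕ} (A B : Finset (Fin n)) : Finset (Fin n) :=
  ((parRes A B).1.drop (parRes A B).2.length).toFinset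

/-- The set of cylindrically unpaired particles of `A` (closed brackets) in `Par(A,B)`. -/
def unmatchedClose {n : ℕ} (A B : Finset (Fin n)) : Finset (Fin n) :=
  ((parRes A B).2.take ((parRes A B).2.length - (parRes A B).1.length)).toFinset

/-- The row-swapping involution on a pair of rows `(A, B)` (`A` below, `B` above):
all cylindrically unmatched entries of `Par(A,B)` are exchanged between the two rows. -/
def sigmaPair {n : ℕ} (A B : Finset (Fin n)) : Finset (Fin n) × Finset (Fin n) :=
  ((A \ unmatchedClose A B) ∪ unmatchedOpen A B,
   (A \ unmatchedClose A B) ∪ unmatchedOpen A B)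

/-- The involution `σ_i` acting on rows `i` and `i+1` of a multiline queue. -/
def sigmaRow {n : ℕ} (i : ℕ) (Q : ℕ → Finset (Fin n)) : ℕ → Finset (Fin n) :=
  fun j =>
    if j = i then (sigmaPair (Q i) (Q (i + 1))).1
    else if j = i + 1 then (sigmaPair (Q i) (Q (i + 1))).2
    else Q j

/-- `u^{(r)}`: the set of sites carrying a particle with label at least `r`. -/
def levelSet {n : ℕ} (u : Fin n → ℕ) (r : ℕ) : Finset (Fin n) :=
  Finset.univ.filter (fun j => r ≤ u j)

/-- Particles of the queue `Q` that are matched (paired) in `Par(Q, B)`. -/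
def matchedQ {n : ℕ} (Q B : Finset (Fin n)) : Finset (Fin n) :=
  Q \ unmatchedClose Q B

/-- The set of sites whose output label under `Q^{(ℓ)}(u)` is at least `r`
(cf. Remark 3.2): for `r ≤ ℓ` it is all of `Q` together with the particles of `u^{(r+1)}`
that collapse, and for `r > ℓ` it is the particles of `Q` matched in `Par(Q, u^{(r)})`
together with the particles of `u^{(r+1)}` that collapse. -/
def labelLevel {n : ℕ} (ℓ : ℕ) (Q : Finset (Fin n)) (u : Fin n → ℕ) (r : ℕ) :
    Finset (Fin n) :=
  (if r ≤ ℓ then Q else matchedQ Q (levelSet u r)) ∪ unmatchedOpen Q (levelSet u (r + 1))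

/-- The fermionic pairing operator `Q^{(ℓ)} : 𝒲 → 𝒲`: the output word, whose value at a
site is the label assigned there (the sum of the nested indicator vectors of the label
level sets). -/
def Qop {n : ℕ} (ℓ : ℕ) (Q : Finset (Fin n)) (u : Fin n → ℕ) : Fin n → ℕ :=
  fun j => ∑ r ∈ Finset.Icc 1 (ℓ + 1 + ∑ j', u j'), if j ∈ labelLevel ℓ Q u r then 1 else 0

/-- The first tensor factor of the combinatorial R matrix `ℛ(A ⊗ B)` on a pair of 0-1
rows (Nakayashiki–Yamada rule): the cylindrically unmatched particles of `Par(A, B)` are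
exchanged between the two rows; the first output factor (occupying the slot of `A`)
is `(A \ uA) ∪ uB`. -/
def Rfirst {n : ℕ} (A B : Finset (Fin n)) : Finset (Fin n) :=
  (A \ unmatchedClose A B) ∪ unmatchedOpen A B

/-! For `r ≥ 2` the sites with output label at least `r` are the particles of `Q` paired in
`Par(Q, u_r)` together with the unpaired particles of `u_{r+1}`, whereas `(ℛ(𝐐 ⊗ u_r))_1`
consists of the same paired particles of `Q` together with the unpaired particles of `u_r`.
Both unions are disjoint, since an unpaired open bracket never sits on a site of `Q`, so summing
over `r` the two expressions differ by a telescoping sum of the unpaired particles of `u_r`;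
its boundary terms are the unpaired particles of `u_2`, absorbed by the level `r = 1`, and
those of `u_{m+1} = ∅`. -/

open Finset

section Telescoping

variable {M : Type*} [AddCommMonoid M]

theorem sum_Icc_eq_sum_Icc_of_eq_zero {f : ℕ → M} {a b c k : ℕ}
    (hf : ∀ r, k < r → f r = 0) (hb : k ≤ b) (hc : k ≤ c) :
    ∑ r ∈ Icc a b, f r = ∑ r ∈ Icc a c, f r := by
  have hk : ∀ b, k ≤ b → ∑ r ∈ Icc a k, f r = ∑ r ∈ Icc a b, f r := fun b hb =>
    sum_subset (Icc_subset_Icc_right hb) fun r hr hrk => hf r <| by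
      simp only [mem_Icc] at hr hrk; omega
  rw [← hk b hb, ← hk c hc]

theorem add_sum_Icc_succ (g : ℕ → M) {a b : ℕ} (hab : a ≤ b + 1) :
    g a + ∑ r ∈ Icc a b, g (r + 1) = ∑ r ∈ Icc a b, g r + g (b + 1) := by
  suffices ∀ c, a ≤ c → g a + ∑ r ∈ Ico a c, g (r + 1) = ∑ r ∈ Ico a c, g r + g c by
    simpa only [Ico_add_one_right_eq_Icc] using this (b + 1) hab
  intro c hac
  induction c, hac using Nat.le_induction with
  | base => simp
  | succ c hac ih => rw [sum_Ico_succ_top hac, sum_Ico_succ_top hac, ← add_assoc, ih]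

end Telescoping

theorem ite_mem_union_of_disjoint {α : Type*} [DecidableEq α] {S T : Finset α}
    (h : Disjoint S T) (x : α) : (if x ∈ S ∪ T then 1 else 0) =
      (if x ∈ S then 1 else 0) + (if x ∈ T then 1 else 0) := by
  by_cases hS : x ∈ S
  · simp [hS, disjoint_left.1 h hS]
  · simp [hS]

section PairProcess

variable {α : Type}

theorem pairProcess_append (ts₁ ts₂ : List (α × Bool)) (opens closes : List α) :
    pairProcess (ts₁ ++ ts₂) opens closes
      = pairProcess ts₂ (pairProcess ts₁ opens closes).1 (pairProcess ts₁ opens closes).2 := by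
  induction ts₁ generalizing opens closes with
  | nil => rfl
  | cons t ts ih =>
    obtain ⟨a, _ | _⟩ := t
    · cases opens <;> exact ih _ _
    · exact ih _ _

theorem pairProcess_of_forall_snd_eq_false {ts : List (α × Bool)} (h : ∀ t ∈ ts, t.2 = false)
    (closes : List α) :
    pairProcess ts [] closes = ([], (ts.map Prod.fst).reverse ++ closes) := by
  induction ts generalizing closes with
  | nil => rfl
  | cons t ts ih =>
    obtain ⟨a, b⟩ := t
    obtain rfl : b = false := h _ List.mem_cons_self
    simp [pairProcess, ih fun t ht => h t (List.mem_cons_of_mem _ ht)]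

end PairProcess

section Pairing

variable {n : ℕ}

def siteTokens (A B : Finset (Fin n)) (j : Fin n) : List (Fin n × Bool) :=
  (if j ∈ B then [(j, true)] else []) ++ (if j ∈ A then [(j, false)] else [])

/- An open bracket pushed at a site of `A` is closed at once by the bracket of `A` at the same
site, so no site of `A` ever stays on the stack. -/
theorem notMem_pairProcess_siteTokens (A B : Finset (Fin n)) (j : Fin n)
    {opens : List (Fin n)} (closes : List (Fin n)) (hopens : ∀ x ∈ opens, x ∉ A) :
    ∀ x ∈ (pairProcess (siteTokens A B j) opens closes).1, x ∉ A := by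
  unfold siteTokens
  split_ifs <;> cases opens <;> simp_all [pairProcess]

theorem notMem_pairProcess_flatMap_siteTokens (A B : Finset (Fin n)) (sites : List (Fin n))
    {opens : List (Fin n)} (closes : List (Fin n)) (hopens : ∀ x ∈ opens, x ∉ A) :
    ∀ x ∈ (pairProcess (sites.flatMap (siteTokens A B)) opens closes).1, x ∉ A := by
  induction sites generalizing opens closes with
  | nil => exact hopens
  | cons j sites ih =>
    rw [List.flatMap_cons, pairProcess_append]
    exact ih _ (notMem_pairProcess_siteTokens A B j closes hopens)

theorem disjoint_unmatchedOpen (A B : Finset (Fin n)) : Disjoint A (unmatchedOpen A B) :=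
  disjoint_right.2 fun _ hx =>
    notMem_pairProcess_flatMap_siteTokens A B (List.finRange n) [] (by simp) _
      (List.mem_of_mem_drop (List.mem_toFinset.1 hx))

theorem disjoint_matchedQ_unmatchedOpen (A B B' : Finset (Fin n)) :
    Disjoint (matchedQ A B) (unmatchedOpen A B') :=
  (disjoint_unmatchedOpen A B').mono_left sdiff_subset

theorem parRes_empty_right (A : Finset (Fin n)) :
    parRes A ∅ = ([], ((parTokens A ∅).map Prod.fst).reverse) := by
  have hcloses : ∀ t ∈ parTokens A ∅, t.2 = false := by simp [parTokens]
  rw [parRes, pairProcess_of_forall_snd_eq_false hcloses, List.append_nil]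

theorem unmatchedOpen_empty_right (A : Finset (Fin n)) : unmatchedOpen A ∅ = ∅ := by
  simp [unmatchedOpen, parRes_empty_right]

theorem unmatchedClose_empty_right (A : Finset (Fin n)) : unmatchedClose A ∅ = A := by
  rw [unmatchedClose, parRes_empty_right]
  simp only [List.length_nil, Nat.sub_zero, List.take_length]
  ext x
  simp [parTokens]

theorem Rfirst_eq_matchedQ_union (A B : Finset (Fin n)) :
    Rfirst A B = matchedQ A B ∪ unmatchedOpen A B := rfl

theorem Rfirst_empty_right (A : Finset (Fin n)) : Rfirst A ∅ = ∅ := by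
  simp [Rfirst, unmatchedOpen_empty_right, unmatchedClose_empty_right]

theorem levelSet_eq_empty_of_forall_lt {u : Fin n → ℕ} {r : ℕ} (h : ∀ j, u j < r) :
    levelSet u r = ∅ :=
  filter_eq_empty_iff.2 fun j _ => (h j).not_ge

theorem labelLevel_of_le (ℓ : ℕ) (Q : Finset (Fin n)) (u : Fin n → ℕ) {r : ℕ} (hr : r ≤ ℓ) :
    labelLevel ℓ Q u r = Q ∪ unmatchedOpen Q (levelSet u (r + 1)) := by
  rw [labelLevel, if_pos hr]

theorem labelLevel_of_lt (ℓ : ℕ) (Q : Finset (Fin n)) (u : Fin n → ℕ) {r : ℕ} (hr : ℓ < r) :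
    labelLevel ℓ Q u r = matchedQ Q (levelSet u r) ∪ unmatchedOpen Q (levelSet u (r + 1)) := by
  rw [labelLevel, if_neg hr.not_ge]

end Pairing

theorem pairing_operator_R_decomposition_general (n : ℕ) (Q : Finset (Fin n)) (u : Fin n → ℕ)
    (m : ℕ) (hub : ∀ j, u j ≤ m) :
    ∀ j, Qop 1 Q u j
      = (if j ∈ Q then 1 else 0)
        + ∑ i ∈ Finset.Icc 2 m, (if j ∈ Rfirst Q (levelSet u i) then 1 else 0) := by
  intro j
  set N := 1 + 1 + ∑ j', u j'
  set k := univ.sup u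
  have hk : ∀ r, k < r → levelSet u r = ∅ := fun r hr =>
    levelSet_eq_empty_of_forall_lt fun j => (le_sup (mem_univ j)).trans_lt hr
  have hkN : k ≤ N := (Finset.sup_le fun j _ => single_le_sum (by simp) (mem_univ j)).trans
    (Nat.le_add_left _ _)
  let g r := if j ∈ unmatchedOpen Q (levelSet u r) then 1 else 0
  let h r := if j ∈ matchedQ Q (levelSet u r) then 1 else 0
  have hg : g (N + 1) = 0 := by simp [g, hk (N + 1) (by omega), unmatchedOpen_empty_right]
  have hR : ∀ r, (if j ∈ Rfirst Q (levelSet u r) then 1 else 0) = h r + g r := fun r => by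
    rw [Rfirst_eq_matchedQ_union, ite_mem_union_of_disjoint (disjoint_matchedQ_unmatchedOpen ..)]
  calc Qop 1 Q u j
      = (if j ∈ Q then 1 else 0) + g 2 + ∑ r ∈ Icc 2 N, (h r + g (r + 1)) := by
        rw [Qop, ← add_sum_Ioc_eq_sum_Icc (by omega), ← Icc_add_one_left_eq_Ioc,
          labelLevel_of_le _ _ _ le_rfl, ite_mem_union_of_disjoint (disjoint_unmatchedOpen ..)]
        refine congrArg _ (sum_congr rfl fun r hr => ?_)
        rw [labelLevel_of_lt _ _ _ (mem_Icc.1 hr).1,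
          ite_mem_union_of_disjoint (disjoint_matchedQ_unmatchedOpen ..)]
    _ = (if j ∈ Q then 1 else 0) + ∑ r ∈ Icc 2 N, (h r + g r) + g (N + 1) := by
        rw [add_assoc, add_assoc, sum_add_distrib, sum_add_distrib, add_left_comm (g 2),
          add_sum_Icc_succ g (by omega)]
        ring
    _ = _ := by
        rw [hg, add_zero, ← sum_congr rfl fun r _ => hR r,
          sum_Icc_eq_sum_Icc_of_eq_zero (fun r hr => by simp [hk r hr, Rfirst_empty_right]) hkN
            (Finset.sup_le fun j _ => hub j)]

/-- decomposition of the pairing operator via the combinatorial R matrix: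
if all nonzero entries of `u` exceed `1`, `m` is the maximal entry of `u` (so the nested
decomposition is `u = u_1 + ⋯ + u_m` with `u_i = υ_i(u)`, `0 < u_m ≤ ⋯ ≤ u_2 = u_1`),
and `Q ⊆ [n]` has indicator vector `𝐐`, then
`Q^{(1)}(u) = 𝐐 + ∑_{i=2}^{m} (ℛ(𝐐 ⊗ u_i))_1`. -/
theorem pairing_operator_R_decomposition (n : ℕ) (Q : Finset (Fin n)) (u : Fin n → ℕ)
    (m : ℕ) (hm0 : 0 < m) (h1 : ∀ j, u j ≠ 0 → 1 < u j)
    (hub : ∀ j, u j ≤ m) (hex : ∃ j, u j = m) :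
    ∀ j, Qop 1 Q u j
      = (if j ∈ Q then 1 else 0)
        + ∑ i ∈ Finset.Icc 2 m, (if j ∈ Rfirst Q (levelSet u i) then 1 else 0) :=
  pairing_operator_R_decomposition_general n Q u m hub
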